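/- arXiv:2603.24613 — 3 statements merged into one kernel-verified Lean document; each statement's English description precedes it below -/
import Mathlib

section
/- If a finite multiset of pairs {(b_i, d_i)}_{i=1}^m satisfies, for each index i, the equivalence 'b_i ≤ t iff z_i ∈ Ker ∂_{p,t}' and 't ≥ d_i iff z_i ∈ Im ∂_{p+1,t}' for a fixed family of chains z_i, and such that at each t the classes of those z_i with t ∈ [b_i, d_i) form a basis of H_p(K_t), then the multiset {(b_i, d_i)} is uniquely determined (up to permutation): for each t, the number of indices with t ∈ [b_i, d_i) equals dim H_p(K_t), and more generally for s ≤ t the number of indices with b_i ≤ s and d_i > t equals the rank of the map H_p(K_s) → H_p(K_t). -/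
set_option maxHeartbeats 1000000


/-- An abstract simplicial complex. -/
def IsSimplicialComplex {V : Type*} [DecidableEq V] (K : Finset (Finset V)) : Prop :=
  ∀ σ ∈ K, σ ≠ ∅ ∧ ∀ τ ⊆ σ, τ ≠ ∅ → τ ∈ K

/-- A filtration function on `K`. -/
def IsFiltration' {V : Type*} [DecidableEq V] (K : Finset (Finset V))
    (f : Finset V → ℝ) : Prop :=
  ∀ σ ∈ K, ∀ τ ∈ K, τ ⊆ σ → f τ ≤ f σ

/-- The boundary operator over `F₂ = ZMod 2`. -/
noncomputable def boundaryOp (V : Type*) [DecidableEq V] :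
    (Finset V →₀ ZMod 2) →ₗ[ZMod 2] (Finset V →₀ ZMod 2) :=
  Finsupp.linearCombination (ZMod 2)
    (fun σ => ∑ v ∈ σ, Finsupp.single (σ.erase v) (1 : ZMod 2))

/-- The space `C_p(K_t)` of `p`-chains of the sublevel complex `K_t`: the span of the
simplices of `K` of cardinality `p+1` with filtration value at most `t`. -/
noncomputable def chainsAt {V : Type*} [DecidableEq V] (K : Finset (Finset V))
    (f : Finset V → ℝ) (p : ℕ) (t : ℝ) : Submodule (ZMod 2) (Finset V →₀ ZMod 2) :=
  Submodule.span (ZMod 2)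
    {c | ∃ σ ∈ K, f σ ≤ t ∧ σ.card = p + 1 ∧ c = Finsupp.single σ (1 : ZMod 2)}

/-- The space `Z_p(K_t) = Ker ∂_{p,t}` of `p`-cycles of `K_t`. -/
noncomputable def cyclesAt {V : Type*} [DecidableEq V] (K : Finset (Finset V))
    (f : Finset V → ℝ) (p : ℕ) (t : ℝ) : Submodule (ZMod 2) (Finset V →₀ ZMod 2) :=
  chainsAt K f p t ⊓ LinearMap.ker (boundaryOp V)

/-- The space `B_p(K_t) = Im ∂_{p+1,t}` of `p`-boundaries of `K_t`. -/
noncomputable def boundariesAt {V : Type*} [DecidableEq V] (K : Finset (Finset V))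
    (f : Finset V → ℝ) (p : ℕ) (t : ℝ) : Submodule (ZMod 2) (Finset V →₀ ZMod 2) :=
  Submodule.map (boundaryOp V) (chainsAt K f (p + 1) t)

/-- Uniqueness of the persistence diagram: if the chains `z_i` and the pairs
`(b_i, d_i)` satisfy (i) `b_i ≤ t ↔ z_i ∈ Ker ∂_{p,t}`, (ii) `d_i ≤ t ↔ z_i ∈ Im ∂_{p+1,t}`,
and (iii) at each `t` the homology classes `[z_i]_t` for `t ∈ [b_i, d_i)` form a basis of
`H_p(K_t)` (realized inside `C_p(K)/B_p(K_t)` as the image of `Z_p(K_t)`), then for each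
`t` the number of indices with `t ∈ [b_i, d_i)` equals `dim H_p(K_t)`, and for `s ≤ t`
the number of indices with `b_i ≤ s` and `d_i > t` equals the rank of the map
`H_p(K_s) → H_p(K_t)` induced by inclusion (whose range is the image of `Z_p(K_s)` in
`C_p(K)/B_p(K_t)`). -/
theorem stmt11 {V : Type*} [DecidableEq V] (K : Finset (Finset V))
    (hK : IsSimplicialComplex K) (f : Finset V → ℝ) (hf : IsFiltration' K f)
    (p m : ℕ) (z : Fin m → (Finset V →₀ ZMod 2)) (b d : Fin m → ℝ)
    (h1 : ∀ (i : Fin m) (t : ℝ), b i ≤ t ↔ z i ∈ cyclesAt K f p t)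
    (h2 : ∀ (i : Fin m) (t : ℝ), d i ≤ t ↔ z i ∈ boundariesAt K f p t)
    (h3li : ∀ t : ℝ, LinearIndependent (ZMod 2)
      (fun i : {i : Fin m // b i ≤ t ∧ t < d i} => (boundariesAt K f p t).mkQ (z i)))
    (h3span : ∀ t : ℝ, Submodule.span (ZMod 2)
        (Set.range (fun i : {i : Fin m // b i ≤ t ∧ t < d i} =>
          (boundariesAt K f p t).mkQ (z i)))
      = (cyclesAt K f p t).map (boundariesAt K f p t).mkQ) :
    (∀ t : ℝ, (Finset.univ.filter (fun i : Fin m => b i ≤ t ∧ t < d i)).card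
      = Module.finrank (ZMod 2) ((cyclesAt K f p t).map (boundariesAt K f p t).mkQ)) ∧
    (∀ s t : ℝ, s ≤ t →
      (Finset.univ.filter (fun i : Fin m => b i ≤ s ∧ t < d i)).card
      = Module.finrank (ZMod 2) ((cyclesAt K f p s).map (boundariesAt K f p t).mkQ)) := by
  
  have hBmono : ∀ s t : ℝ, s ≤ t →
      boundariesAt K f p s ≤ boundariesAt K f p t := by
    intro s t hst
    apply Submodule.map_mono
    apply Submodule.span_mono
    rintro c ⟨σ, hσ, hfs, hcard, rfl⟩
    exact ⟨σ, hσ, hfs.trans hst, hcard, rfl⟩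
  have key : ∀ s t : ℝ, s ≤ t →
      (Finset.univ.filter (fun i : Fin m => b i ≤ s ∧ t < d i)).card
      = Module.finrank (ZMod 2) ((cyclesAt K f p s).map (boundariesAt K f p t).mkQ) := by
    intro s t hst
    set g : {i : Fin m // b i ≤ s ∧ t < d i} →
        (Finset V →₀ ZMod 2) ⧸ boundariesAt K f p t :=
      fun i => (boundariesAt K f p t).mkQ (z i) with hg
    have hli : LinearIndependent (ZMod 2) g := by
      have he : Function.Injective
          (fun i : {i : Fin m // b i ≤ s ∧ t < d i} =>
            (⟨i.1, i.2.1.trans hst, i.2.2⟩ : {i : Fin m // b i ≤ t ∧ t < d i})) := by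
        intro a c hh
        simpa [Subtype.ext_iff] using hh
      have h2' := (h3li t).comp _ he
      exact h2'
    have hspan : Submodule.span (ZMod 2) (Set.range g)
        = (cyclesAt K f p s).map (boundariesAt K f p t).mkQ := by
      apply le_antisymm
      · rw [Submodule.span_le]
        rintro _ ⟨i, rfl⟩
        exact Submodule.mem_map_of_mem ((h1 i s).mp i.2.1)
      · rintro _ ⟨c, hc, rfl⟩
        -- use the basis at time s
        have hzS : ∀ i : {i : Fin m // b i ≤ s ∧ s < d i}, z i ∈ (⊤ : Submodule (ZMod 2) _) :=
          fun _ => trivial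
        have hms : (boundariesAt K f p s).mkQ c ∈
            Submodule.span (ZMod 2) (Set.range
              (fun i : {i : Fin m // b i ≤ s ∧ s < d i} =>
                (boundariesAt K f p s).mkQ (z i))) := by
          rw [h3span s]
          exact Submodule.mem_map_of_mem hc
        have hms' : (boundariesAt K f p s).mkQ c ∈
            Submodule.map (boundariesAt K f p s).mkQ
              (Submodule.span (ZMod 2) (Set.range
                (fun i : {i : Fin m // b i ≤ s ∧ s < d i} => z i))) := by
          rw [Submodule.map_span, ← Set.range_comp]
          exact hms
        obtain ⟨y, hy, hyc⟩ := hms'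
        have hdiff : c - y ∈ boundariesAt K f p s := by
          rw [← Submodule.ker_mkQ (boundariesAt K f p s), LinearMap.mem_ker,
            map_sub, hyc, sub_self]
        have heq : (boundariesAt K f p t).mkQ c = (boundariesAt K f p t).mkQ y := by
          have h0 : (boundariesAt K f p t).mkQ c - (boundariesAt K f p t).mkQ y = 0 := by
            rw [← map_sub, ← LinearMap.mem_ker, Submodule.ker_mkQ]
            exact hBmono s t hst hdiff
          exact sub_eq_zero.mp h0
        rw [heq]
        have hyt : (boundariesAt K f p t).mkQ y ∈
            Submodule.map (boundariesAt K f p t).mkQ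
              (Submodule.span (ZMod 2) (Set.range
                (fun i : {i : Fin m // b i ≤ s ∧ s < d i} => z i))) :=
          Submodule.mem_map_of_mem hy
        rw [Submodule.map_span, ← Set.range_comp] at hyt
        refine Submodule.span_le.mpr ?_ hyt
        rintro _ ⟨i, rfl⟩
        by_cases hdi : t < d i.1
        · exact Submodule.subset_span ⟨⟨i.1, i.2.1, hdi⟩, rfl⟩
        · have hz0 : (boundariesAt K f p t).mkQ (z i.1) = 0 := by
            rw [← LinearMap.mem_ker, Submodule.ker_mkQ]
            exact (h2 i.1 t).mp (not_lt.mp hdi)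
          simp only [Function.comp_apply, hz0]
          exact Submodule.zero_mem _
    rw [← hspan, finrank_span_eq_card hli, Fintype.card_subtype]
  exact ⟨fun t => key t t le_rfl, key⟩
end

section
/- The bottleneck matching cost between two finite multisets of points above the diagonal in ℝ², defined as the infimum over partial matchings π (bijections between α ∪ Δ and β ∪ Δ, where Δ is the diagonal {(t,t)}) of sup_x ‖x − π(x)‖, satisfies the triangle inequality: d(α, γ) ≤ d(α, β) + d(β, γ). -/
set_option maxHeartbeats 1000000


noncomputable section

/-- Points of persistence diagrams live in the Euclidean plane. -/
abbrev E2 := EuclideanSpace ℝ (Fin 2)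

/-- The diagonal `Δ = {(t,t) : t ∈ ℝ}`. -/
def diagSet : Set E2 := {x | x 0 = x 1}

/-- A partial matching between the multisets `α` and `β`: a multiset of matched pairs
`P`, realizing a bijection between `α ∪ Δ` and `β ∪ Δ` (restricted to the points that
matter): the first components of `P` are exactly `α` together with some diagonal
points, and likewise for the second components and `β`. -/
def IsPartialMatching (α β : Multiset E2) (P : Multiset (E2 × E2)) : Prop :=
  ∃ Dα Dβ : Multiset E2, (∀ x ∈ Dα, x ∈ diagSet) ∧ (∀ y ∈ Dβ, y ∈ diagSet) ∧
    P.map Prod.fst = α + Dα ∧ P.map Prod.snd = β + Dβ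

/-- The bottleneck cost of a matching: the supremum of the distances between matched
points. -/
def bottleneckCost (P : Multiset (E2 × E2)) : ℝ :=
  sSup (insert 0 {r | ∃ p ∈ P, dist p.1 p.2 = r})

/-- The bottleneck distance: the infimal cost over all partial matchings. -/
def bottleneck (α β : Multiset E2) : ℝ :=
  sInf {c | ∃ P, IsPartialMatching α β P ∧ bottleneckCost P = c}

lemma costSet_finite (P : Multiset (E2 × E2)) :
    (insert (0:ℝ) {r | ∃ p ∈ P, dist p.1 p.2 = r}).Finite := by
  apply Set.Finite.insert
  have : {r | ∃ p ∈ P, dist p.1 p.2 = r} =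
      (fun p : E2 × E2 => dist p.1 p.2) '' {p | p ∈ P} := by
    ext r; simp [Set.mem_image, eq_comm]
  rw [this]
  exact (P.finite_toSet).image _

lemma cost_nonneg (P : Multiset (E2 × E2)) : 0 ≤ bottleneckCost P :=
  le_csSup (costSet_finite P).bddAbove (Set.mem_insert _ _)

lemma dist_le_cost {P : Multiset (E2 × E2)} {p : E2 × E2} (hp : p ∈ P) :
    dist p.1 p.2 ≤ bottleneckCost P :=
  le_csSup (costSet_finite P).bddAbove (Set.mem_insert_of_mem _ ⟨p, hp, rfl⟩)

lemma cost_le {P : Multiset (E2 × E2)} {c : ℝ} (hc : 0 ≤ c)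
    (h : ∀ p ∈ P, dist p.1 p.2 ≤ c) : bottleneckCost P ≤ c := by
  apply csSup_le ⟨0, Set.mem_insert _ _⟩
  rintro r (rfl | ⟨p, hp, rfl⟩)
  · exact hc
  · exact h p hp

lemma glue (M : Multiset E2) : ∀ (P Q : Multiset (E2 × E2)),
    P.map Prod.snd = M → Q.map Prod.fst = M →
    ∃ R : Multiset (E2 × E2 × E2),
      R.map (fun t => (t.1, t.2.1)) = P ∧ R.map (fun t => t.2) = Q := by
  classical
  induction M using Multiset.induction with
  | empty =>
    intro P Q hP hQ
    rw [Multiset.map_eq_zero] at hP hQ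
    exact ⟨0, by simp [hP], by simp [hQ]⟩
  | cons m M ih =>
    intro P Q hP hQ
    obtain ⟨p, hpP, hp2, hP'⟩ := (Multiset.map_eq_cons _ P M m).2 hP
    obtain ⟨q, hqQ, hq1, hQ'⟩ := (Multiset.map_eq_cons _ Q M m).2 hQ
    obtain ⟨R, hR1, hR2⟩ := ih _ _ hP' hQ'
    refine ⟨(p.1, q) ::ₘ R, ?_, ?_⟩
    · have hpq : ((p.1, q).1, (p.1, q).2.1) = p := by
        rw [Prod.ext_iff]; exact ⟨rfl, by simp [hq1, hp2]⟩
      rw [Multiset.map_cons, hR1, hpq, Multiset.cons_erase hpP]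
    · rw [Multiset.map_cons, hR2, Multiset.cons_erase hqQ]

lemma matching_exists (α β : Multiset E2) :
    ∃ P, IsPartialMatching α β P := by
  classical
  set π : E2 → E2 := fun x => WithLp.toLp 2 (fun _ => (x 0 + x 1) / 2) with hπ
  refine ⟨α.map (fun x => (x, π x)) + β.map (fun y => (π y, y)),
    β.map π, α.map π, ?_, ?_, ?_, ?_⟩
  · intro x hx; obtain ⟨y, _, rfl⟩ := Multiset.mem_map.mp hx; rfl
  · intro x hx; obtain ⟨y, _, rfl⟩ := Multiset.mem_map.mp hx; rfl
  · simp [Multiset.map_map, Function.comp]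
  · simp [Multiset.map_map, Function.comp, add_comm]

lemma bottleneck_bddBelow (α β : Multiset E2) :
    BddBelow {c | ∃ P, IsPartialMatching α β P ∧ bottleneckCost P = c} := by
  refine ⟨0, ?_⟩
  rintro c ⟨P, _, rfl⟩
  exact cost_nonneg P

lemma bottleneck_nonempty (α β : Multiset E2) :
    {c | ∃ P, IsPartialMatching α β P ∧ bottleneckCost P = c}.Nonempty := by
  obtain ⟨P, hP⟩ := matching_exists α β
  exact ⟨bottleneckCost P, P, hP, rfl⟩

/-- The bottleneck matching cost between finite multisets of points above the diagonal
satisfies the triangle inequality: `d(α,γ) ≤ d(α,β) + d(β,γ)`. -/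
theorem stmt12 (α β γ : Multiset E2)
    (hα : ∀ x ∈ α, x 0 < x 1) (hβ : ∀ x ∈ β, x 0 < x 1) (hγ : ∀ x ∈ γ, x 0 < x 1) :
    bottleneck α γ ≤ bottleneck α β + bottleneck β γ := by
  have key : ∀ ε : ℝ, 0 < ε → bottleneck α γ < bottleneck α β + bottleneck β γ + ε := by
    intro ε hε
    obtain ⟨c₁, ⟨P, hP, rfl⟩, hc₁⟩ :=
      Real.lt_sInf_add_pos (bottleneck_nonempty α β) (half_pos hε)
    obtain ⟨c₂, ⟨Q, hQ, rfl⟩, hc₂⟩ :=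
      Real.lt_sInf_add_pos (bottleneck_nonempty β γ) (half_pos hε)
    obtain ⟨Dα, Dβ, hDα, hDβ, hPf, hPs⟩ := hP
    obtain ⟨Dβ', Dγ, hDβ', hDγ, hQf, hQs⟩ := hQ
    set P' : Multiset (E2 × E2) := P + Dβ'.map (fun y => (y, y)) with hP'def
    set Q' : Multiset (E2 × E2) := Q + Dβ.map (fun y => (y, y)) with hQ'def
    have hP's : P'.map Prod.snd = β + Dβ + Dβ' := by
      simp [hP'def, hPs, Multiset.map_map, Function.comp]
    have hQ'f : Q'.map Prod.fst = β + Dβ + Dβ' := by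
      simp [hQ'def, hQf, Multiset.map_map, Function.comp]
      rw [add_assoc, add_assoc, add_comm (Dβ' ) Dβ]
    obtain ⟨R, hR1, hR2⟩ := glue (β + Dβ + Dβ') P' Q' hP's hQ'f
    set T : Multiset (E2 × E2) := R.map (fun t => (t.1, t.2.2)) with hTdef
    have hTmatch : IsPartialMatching α γ T := by
      refine ⟨Dα + Dβ', Dγ + Dβ, ?_, ?_, ?_, ?_⟩
      · intro x hx
        rcases Multiset.mem_add.mp hx with h | h
        exacts [hDα x h, hDβ' x h]
      · intro x hx
        rcases Multiset.mem_add.mp hx with h | h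
        exacts [hDγ x h, hDβ x h]
      · have : T.map Prod.fst = P'.map Prod.fst := by
          rw [hTdef, ← hR1, Multiset.map_map, Multiset.map_map]; rfl
        rw [this, hP'def, Multiset.map_add, hPf, Multiset.map_map]
        simp [Function.comp, add_assoc]
      · have : T.map Prod.snd = Q'.map Prod.snd := by
          rw [hTdef, ← hR2, Multiset.map_map, Multiset.map_map]; rfl
        rw [this, hQ'def, Multiset.map_add, hQs, Multiset.map_map]
        simp [Function.comp, add_assoc]
    have hcostP' : bottleneckCost P' ≤ bottleneckCost P := by
      apply cost_le (cost_nonneg P)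
      intro p hp
      rcases Multiset.mem_add.mp hp with h | h
      · exact dist_le_cost h
      · obtain ⟨y, _, rfl⟩ := Multiset.mem_map.mp h
        simp [cost_nonneg P]
    have hcostQ' : bottleneckCost Q' ≤ bottleneckCost Q := by
      apply cost_le (cost_nonneg Q)
      intro p hp
      rcases Multiset.mem_add.mp hp with h | h
      · exact dist_le_cost h
      · obtain ⟨y, _, rfl⟩ := Multiset.mem_map.mp h
        simp [cost_nonneg Q]
    have hcostT : bottleneckCost T ≤ bottleneckCost P' + bottleneckCost Q' := by
      apply cost_le (add_nonneg (cost_nonneg P') (cost_nonneg Q'))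
      intro p hp
      obtain ⟨t, htR, rfl⟩ := Multiset.mem_map.mp hp
      have h1 : (t.1, t.2.1) ∈ P' := by
        rw [← hR1]; exact Multiset.mem_map_of_mem _ htR
      have h2 : t.2 ∈ Q' := by
        rw [← hR2]; exact Multiset.mem_map_of_mem _ htR
      have a1 := dist_le_cost h1
      have a2 := dist_le_cost h2
      have a3 := dist_triangle t.1 t.2.1 t.2.2
      exact le_trans a3 (add_le_add a1 a2)
    have hle : bottleneck α γ ≤ bottleneckCost T :=
      csInf_le (bottleneck_bddBelow α γ) ⟨T, hTmatch, rfl⟩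
    calc bottleneck α γ ≤ bottleneckCost T := hle
      _ ≤ bottleneckCost P' + bottleneckCost Q' := hcostT
      _ ≤ bottleneckCost P + bottleneckCost Q := add_le_add hcostP' hcostQ'
      _ < (bottleneck α β + ε/2) + (bottleneck β γ + ε/2) := add_lt_add hc₁ hc₂
      _ = bottleneck α β + bottleneck β γ + ε := by ring
  by_contra hcon
  push_neg at hcon
  have h2 := key ((bottleneck α γ - (bottleneck α β + bottleneck β γ))/2) (by linarith)
  linarith


end
end

section
/- Let L : ℝ^N → ℝ be a Lipschitz function with constant C that is differentiable at a point θ where the gradient norm satisfies ε ≤ (1−β)/(2C) · ‖g‖ for the descent direction g, and suppose L restricted to a neighborhood admits a C² extension with Hessian bounded by C. Then for any step size α ≤ ε/‖g‖, the loss decrease bound L(θ − α g) ≤ L(θ) − β·α·‖g‖² holds when the descent direction g is chosen as the minimal norm element of the convex hull of gradients of C²-smooth functions L_i that each agree with L on their stratum, all ε-close to θ. -/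
open scoped RealInnerProductSpace

/-- Stratified gradient descent loss-decrease guarantee
(Proposition 4 of Leygonie–Carrière–Lacombe–Oudot): if `L` is `C`-Lipschitz and
stratifiably smooth (on each stratum `S i` it agrees with a `C²` function `Li i` with
Hessian bounded by `C`), is differentiable at `θ`, and `g` is the minimal-norm element
of the convex hull of the gradients `∇(Li i)(θi i)` sampled at points `θi i` of the
strata meeting the closed `ε`-ball around `θ`, with `ε ≤ (1−β)/(2C)·‖g‖`, then for any
step size `0 < α ≤ ε/‖g‖` one has `L(θ − α g) ≤ L(θ) − β·α·‖g‖²`. -/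
theorem stmt15 {N : ℕ} (L : EuclideanSpace ℝ (Fin N) → ℝ) (C β ε : ℝ)
    (hC : 0 < C) (hβ0 : 0 < β) (hβ1 : β < 1) (hε : 0 < ε)
    (hLip : LipschitzWith C.toNNReal L)
    (k : ℕ) (S : Fin k → Set (EuclideanSpace ℝ (Fin N)))
    (hcover : (⋃ i, S i) = Set.univ)
    (Li : Fin k → EuclideanSpace ℝ (Fin N) → ℝ)
    (hLiC2 : ∀ i, ContDiff ℝ 2 (Li i))
    (hagree : ∀ i, ∀ x ∈ S i, Li i x = L x)
    (hHess : ∀ i x, ‖iteratedFDeriv ℝ 2 (Li i) x‖ ≤ C)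
    (θ : EuclideanSpace ℝ (Fin N)) (hdiff : DifferentiableAt ℝ L θ)
    (θi : Fin k → EuclideanSpace ℝ (Fin N))
    (hθi : ∀ i, (S i ∩ Metric.closedBall θ ε).Nonempty →
      θi i ∈ S i ∩ Metric.closedBall θ ε)
    (g : EuclideanSpace ℝ (Fin N))
    (hg : g ∈ convexHull ℝ
      {v | ∃ i, (S i ∩ Metric.closedBall θ ε).Nonempty ∧ v = gradient (Li i) (θi i)})
    (hmin : ∀ h ∈ convexHull ℝ
      {v | ∃ i, (S i ∩ Metric.closedBall θ ε).Nonempty ∧ v = gradient (Li i) (θi i)},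
      ‖g‖ ≤ ‖h‖)
    (hεg : ε ≤ (1 - β) / (2 * C) * ‖g‖)
    (α : ℝ) (hα0 : 0 < α) (hα : α ≤ ε / ‖g‖) :
    L (θ - α • g) ≤ L θ - β * α * ‖g‖ ^ 2 := by
  classical
  set sset := {v | ∃ i, (S i ∩ Metric.closedBall θ ε).Nonempty ∧
      v = gradient (Li i) (θi i)} with hsset
  -- ‖g‖ > 0
  have hg0 : 0 < ‖g‖ := by
    rcases (norm_nonneg g).lt_or_eq with h | h
    · exact h
    · exfalso
      rw [← h, mul_zero] at hεg
      linarith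
  -- 2Cε ≤ (1-β)‖g‖
  have h2C : (0:ℝ) < 2 * C := by linarith
  have hkey : ε * (2 * C) ≤ (1 - β) * ‖g‖ := by
    rw [div_mul_eq_mul_div, le_div_iff₀ h2C] at hεg
    exact hεg
  have hαg : α * ‖g‖ ≤ ε := (le_div_iff₀ hg0).mp hα
  -- projection property of the minimal norm element
  have hKconv : Convex ℝ (convexHull ℝ sset) := convex_convexHull ℝ sset
  have hproj : ∀ w ∈ convexHull ℝ sset, ‖g‖ ^ 2 ≤ ⟪g, w⟫ := by
    have hinf : ‖(0 : EuclideanSpace ℝ (Fin N)) - g‖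
        = ⨅ w : ↥(convexHull ℝ sset), ‖(0 : EuclideanSpace ℝ (Fin N)) - w‖ := by
      haveI : Nonempty ↥(convexHull ℝ sset) := ⟨⟨g, hg⟩⟩
      refine le_antisymm ?_ ?_
      · exact le_ciInf fun w => by simpa using hmin w.1 w.2
      · refine ciInf_le ⟨0, ?_⟩ (⟨g, hg⟩ : ↥(convexHull ℝ sset))
        rintro x ⟨w, rfl⟩
        positivity
    intro w hw
    have h2 := (norm_eq_iInf_iff_real_inner_le_zero hKconv hg).1 hinf w hw
    rw [zero_sub, inner_neg_left, inner_sub_right] at h2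
    have h3 : ⟪g, g⟫ = ‖g‖ ^ 2 := real_inner_self_eq_norm_sq g
    linarith
  -- gradient of each Li is C-Lipschitz
  have hgradLip : ∀ i (x y : EuclideanSpace ℝ (Fin N)),
      ‖gradient (Li i) x - gradient (Li i) y‖ ≤ C * ‖x - y‖ := by
    intro i x y
    have hΦ : ∀ z, fderiv ℝ (Li i) z =
        continuousMultilinearCurryFin1 ℝ (EuclideanSpace ℝ (Fin N)) ℝ
          (iteratedFDeriv ℝ 1 (Li i) z) := by
      intro z
      ext v
      simp [iteratedFDeriv_one_apply, Fin.snoc]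
    have hdiff1 : ∀ z : EuclideanSpace ℝ (Fin N),
        DifferentiableAt ℝ (iteratedFDeriv ℝ 1 (Li i)) z := by
      intro z
      exact ((hLiC2 i).differentiable_iteratedFDeriv (by norm_num)) z
    have hbound : ∀ z, ‖fderiv ℝ (iteratedFDeriv ℝ 1 (Li i)) z‖ ≤ C := by
      intro z
      rw [norm_fderiv_iteratedFDeriv]
      exact hHess i z
    have hmvt := convex_univ.norm_image_sub_le_of_norm_fderiv_le
      (fun z _ => hdiff1 z) (fun z _ => hbound z) (Set.mem_univ y) (Set.mem_univ x)
    have heq : ‖gradient (Li i) x - gradient (Li i) y‖ =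
        ‖iteratedFDeriv ℝ 1 (Li i) x - iteratedFDeriv ℝ 1 (Li i) y‖ := by
      simp only [gradient]
      rw [← map_sub, LinearIsometryEquiv.norm_map, hΦ x, hΦ y, ← map_sub,
        LinearIsometryEquiv.norm_map]
    rw [heq]
    exact hmvt
  have hray : Continuous (fun s : ℝ => θ - s • g) :=
    continuous_const.sub (continuous_id.smul continuous_const)
  set c : ℝ := β * ‖g‖ ^ 2 with hc
  have hlincont : Continuous (fun s : ℝ => c * s) := continuous_const.mul continuous_id
  -- derivative of the smooth models along the ray
  have hpath : ∀ (i : Fin k) (t : ℝ),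
      HasDerivAt (fun s : ℝ => Li i (θ - s • g) + c * s)
        (-⟪gradient (Li i) (θ - t • g), g⟫ + c) t := by
    intro i t
    have hA : HasDerivAt (fun s : ℝ => θ - s • g) (-g) t := by
      have h1 : HasDerivAt (fun s : ℝ => s • g) ((1:ℝ) • g) t :=
        (hasDerivAt_id t).smul_const g
      simpa using h1.const_sub θ
    have hGA := (((hLiC2 i).differentiable two_ne_zero) (θ - t • g)).hasGradientAt
    have hcomp := hGA.hasFDerivAt.comp_hasDerivAt t hA
    have hval : (InnerProductSpace.toDual ℝ (EuclideanSpace ℝ (Fin N))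
        (gradient (Li i) (θ - t • g))) (-g)
        = -⟪gradient (Li i) (θ - t • g), g⟫ := by
      rw [InnerProductSpace.toDual_apply_apply, inner_neg_right]
    rw [hval] at hcomp
    have hlin : HasDerivAt (fun s : ℝ => c * s) c t := by
      simpa using (hasDerivAt_id t).const_mul c
    exact hcomp.add hlin
  -- points on the ray stay in the ball
  have hrelmem : ∀ t ∈ Set.Icc (0:ℝ) α, θ - t • g ∈ Metric.closedBall θ ε := by
    intro t ht
    rw [Metric.mem_closedBall, dist_eq_norm]
    have h1 : θ - t • g - θ = -(t • g) := by abel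
    rw [h1, norm_neg, norm_smul, Real.norm_eq_abs, abs_of_nonneg ht.1]
    have : t * ‖g‖ ≤ α * ‖g‖ := by
      apply mul_le_mul_of_nonneg_right ht.2 (norm_nonneg g)
    linarith
  -- antitone on [0, α] for relevant strata
  have hAnti : ∀ i, (S i ∩ Metric.closedBall θ ε).Nonempty →
      AntitoneOn (fun s : ℝ => Li i (θ - s • g) + c * s) (Set.Icc 0 α) := by
    intro i hi
    refine antitoneOn_of_deriv_nonpos (convex_Icc 0 α) ?_ ?_ ?_
    · apply Continuous.continuousOn
      exact ((hLiC2 i).continuous.comp hray).add hlincont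
    · intro t ht
      exact ((hpath i t).differentiableAt).differentiableWithinAt
    · intro t ht
      rw [interior_Icc] at ht
      have ht' : t ∈ Set.Icc (0:ℝ) α := ⟨ht.1.le, ht.2.le⟩
      rw [(hpath i t).deriv]
      obtain ⟨hSi, hball⟩ := hθi i hi
      have hv : ‖g‖ ^ 2 ≤ ⟪g, gradient (Li i) (θi i)⟫ :=
        hproj _ (subset_convexHull ℝ sset ⟨i, hi, rfl⟩)
      have hdist : ‖(θ - t • g) - θi i‖ ≤ 2 * ε := by
        have h1 : ‖(θ - t • g) - θ‖ ≤ ε := by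
          have := hrelmem t ht'
          rwa [Metric.mem_closedBall, dist_eq_norm] at this
        have h2 : ‖θ - θi i‖ ≤ ε := by
          rw [Metric.mem_closedBall, dist_eq_norm] at hball
          rw [norm_sub_rev]
          exact hball
        calc ‖(θ - t • g) - θi i‖ = ‖((θ - t • g) - θ) + (θ - θi i)‖ := by
              congr 1; abel
        _ ≤ ‖(θ - t • g) - θ‖ + ‖θ - θi i‖ := norm_add_le _ _
        _ ≤ 2 * ε := by linarith
      have hgl : ‖gradient (Li i) (θ - t • g) - gradient (Li i) (θi i)‖ ≤ C * (2 * ε) := by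
        calc ‖gradient (Li i) (θ - t • g) - gradient (Li i) (θi i)‖
            ≤ C * ‖(θ - t • g) - θi i‖ := hgradLip i _ _
        _ ≤ C * (2 * ε) := by
              apply mul_le_mul_of_nonneg_left hdist hC.le
      have hip : |⟪gradient (Li i) (θ - t • g) - gradient (Li i) (θi i), g⟫|
          ≤ (C * (2 * ε)) * ‖g‖ := by
        calc |⟪gradient (Li i) (θ - t • g) - gradient (Li i) (θi i), g⟫|
            ≤ ‖gradient (Li i) (θ - t • g) - gradient (Li i) (θi i)‖ * ‖g‖ :=
              abs_real_inner_le_norm _ _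
        _ ≤ (C * (2 * ε)) * ‖g‖ := mul_le_mul_of_nonneg_right hgl (norm_nonneg g)
      have hsplit : ⟪gradient (Li i) (θ - t • g), g⟫
          = ⟪gradient (Li i) (θi i), g⟫
            + ⟪gradient (Li i) (θ - t • g) - gradient (Li i) (θi i), g⟫ := by
        rw [inner_sub_left]; ring
      have hcomm : ⟪gradient (Li i) (θi i), g⟫ = ⟪g, gradient (Li i) (θi i)⟫ :=
        real_inner_comm _ _
      have habs := abs_le.mp hip
      have hmul : (ε * (2 * C)) * ‖g‖ ≤ ((1 - β) * ‖g‖) * ‖g‖ :=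
        mul_le_mul_of_nonneg_right hkey (norm_nonneg g)
      have hsq : ((1 - β) * ‖g‖) * ‖g‖ = (1 - β) * ‖g‖ ^ 2 := by ring
      have hCe : (C * (2 * ε)) * ‖g‖ = (ε * (2 * C)) * ‖g‖ := by ring
      rw [hsq] at hmul
      rw [hCe] at habs
      -- ⟪∇Li(pt), g⟫ ≥ ‖g‖² - (1-β)‖g‖² = β‖g‖² = c
      have : c ≤ ⟪gradient (Li i) (θ - t • g), g⟫ := by
        rw [hsplit, hcomm, hc]
        nlinarith [habs.1, hv, hmul]
      linarith
  -- the continuous selection F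
  set F : ℝ → ℝ := fun s : ℝ => L (θ - s • g) + c * s with hFdef
  have hFcont : Continuous F := by
    apply Continuous.add
    · exact hLip.continuous.comp hray
    · exact hlincont
  have hsel : ∀ t ∈ Set.Icc (0:ℝ) α, ∃ i, (S i ∩ Metric.closedBall θ ε).Nonempty ∧
      F t = Li i (θ - t • g) + c * t := by
    intro t ht
    have hmem : θ - t • g ∈ Metric.closedBall θ ε := hrelmem t ht
    have : θ - t • g ∈ ⋃ i, S i := by rw [hcover]; exact Set.mem_univ _
    obtain ⟨i, hi⟩ := Set.mem_iUnion.mp this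
    refine ⟨i, ⟨_, hi, hmem⟩, ?_⟩
    rw [hFdef]
    simp only [hagree i _ hi]
  -- main inequality F α ≤ F 0 via continuous selection of antitone functions
  have hFle : F α ≤ F 0 := by
    by_contra hcon
    push_neg at hcon
    set A := {t : ℝ | t ∈ Set.Icc (0:ℝ) α ∧ F t ≤ F 0} with hA
    have h0A : (0:ℝ) ∈ A := ⟨⟨le_refl 0, hα0.le⟩, le_refl _⟩
    have hbdd : BddAbove A := ⟨α, fun t ht => ht.1.2⟩
    set m := sSup A with hm
    have hmIcc : m ∈ Set.Icc (0:ℝ) α :=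
      ⟨le_csSup hbdd h0A, csSup_le ⟨0, h0A⟩ fun t ht => ht.1.2⟩
    have hFm : F m ≤ F 0 := by
      have hclos : m ∈ closure A := csSup_mem_closure ⟨0, h0A⟩ hbdd
      have hsub : closure A ⊆ {t | F t ≤ F 0} :=
        closure_minimal (fun t ht => ht.2)
          (isClosed_le hFcont continuous_const)
      exact hsub hclos
    have hmlt : m < α := by
      rcases lt_or_eq_of_le hmIcc.2 with h | h
      · exact h
      · exfalso; rw [h] at hFm; linarith
    have hgt : ∀ t ∈ Set.Ioc m α, F 0 < F t := by
      intro t ht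
      by_contra h'
      push_neg at h'
      have : t ≤ m := le_csSup hbdd ⟨⟨hmIcc.1.trans ht.1.le, ht.2⟩, h'⟩
      exact absurd ht.1 (not_lt.2 this)
    set T : Fin k → Set ℝ := fun i => {t : ℝ | t ∈ Set.Ioc m α ∧
      (S i ∩ Metric.closedBall θ ε).Nonempty ∧
      F t = Li i (θ - t • g) + c * t} with hT
    have hcov2 : Set.Ioc m α ⊆ ⋃ i, T i := by
      intro t ht
      obtain ⟨i, hi1, hi2⟩ := hsel t ⟨hmIcc.1.trans ht.1.le, ht.2⟩
      exact Set.mem_iUnion.2 ⟨i, ht, hi1, hi2⟩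
    have hmcl : m ∈ ⋃ i, closure (T i) := by
      have h1 : m ∈ closure (Set.Ioc m α) := by
        rw [closure_Ioc hmlt.ne]
        exact ⟨le_refl m, hmlt.le⟩
      have h2 : closure (Set.Ioc m α) ⊆ ⋃ i, closure (T i) := by
        apply closure_minimal
        · exact hcov2.trans (Set.iUnion_mono fun i => subset_closure)
        · exact isClosed_iUnion_of_finite fun i => isClosed_closure
      exact h2 h1
    obtain ⟨i, hicl⟩ := Set.mem_iUnion.mp hmcl
    have hTne : (T i).Nonempty := by
      by_contra h'
      rw [Set.not_nonempty_iff_eq_empty] at h'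
      rw [h', closure_empty] at hicl
      exact hicl
    obtain ⟨t0, ht0⟩ := hTne
    have hrel : (S i ∩ Metric.closedBall θ ε).Nonempty := ht0.2.1
    have hhicont : Continuous (fun s : ℝ => Li i (θ - s • g) + c * s) :=
      ((hLiC2 i).continuous.comp hray).add hlincont
    have heqm : F m = Li i (θ - m • g) + c * m := by
      have heq : Set.EqOn F (fun s : ℝ => Li i (θ - s • g) + c * s) (T i) :=
        fun t ht => ht.2.2
      exact heq.closure hFcont hhicont hicl
    have hanti := hAnti i hrel
    have ht0Icc : t0 ∈ Set.Icc (0:ℝ) α := ⟨hmIcc.1.trans ht0.1.1.le, ht0.1.2⟩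
    have hle : (fun s : ℝ => Li i (θ - s • g) + c * s) t0
        ≤ (fun s : ℝ => Li i (θ - s • g) + c * s) m := hanti hmIcc ht0Icc ht0.1.1.le
    have hFt0 : F 0 < F t0 := hgt t0 ht0.1
    have hFt0eq : F t0 = Li i (θ - t0 • g) + c * t0 := ht0.2.2
    simp only at hle
    rw [← hFt0eq, ← heqm] at hle
    linarith
  -- conclude
  have hF0 : F 0 = L θ := by
    rw [hFdef]
    simp
  have hFα : F α = L (θ - α • g) + c * α := rfl
  rw [hF0, hFα] at hFle
  have : c * α = β * α * ‖g‖ ^ 2 := by rw [hc]; ring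
  linarith
end
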